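/- arXiv:0907.3252 — 4 statements merged into one kernel-verified Lean document; each statement's English description precedes it below -/
import Mathlib

section
/- For every finite subgraph G of 𝒢 and every dimer covering M of G, the number of impurities of M equals (|V(G)∩𝒱₁| + |V(G)∩𝒱₂| − |V(G)∩𝒱₃|)/2; in particular the number of impurities is the same for all dimer coverings of G. -/
open SimpleGraph

/-- Vertices of the radial graph: `inl p` is the integer point `p ∈ ℤ²`,
`inr c` is the half-integer point `c + (1/2, 1/2)`. -/
abbrev GVert : Type := (ℤ × ℤ) ⊕ (ℤ × ℤ)

def radialAdj : GVert → GVert → Prop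
  | Sum.inl p, Sum.inl q => (p.1 - q.1).natAbs + (p.2 - q.2).natAbs = 1
  | Sum.inl p, Sum.inr c => (p.1 = c.1 ∨ p.1 = c.1 + 1) ∧ (p.2 = c.2 ∨ p.2 = c.2 + 1)
  | Sum.inr c, Sum.inl p => (p.1 = c.1 ∨ p.1 = c.1 + 1) ∧ (p.2 = c.2 ∨ p.2 = c.2 + 1)
  | Sum.inr _, Sum.inr _ => False

/-- The radial graph 𝒢 of ℤ². -/
def radialGraph : SimpleGraph GVert where
  Adj := radialAdj
  symm := by
    constructor
    rintro (p | c) (q | d) h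
    · have h' : (p.1 - q.1).natAbs + (p.2 - q.2).natAbs = 1 := h
      show (q.1 - p.1).natAbs + (q.2 - p.2).natAbs = 1
      omega
    · exact h
    · exact h
    · exact h.elim
  loopless := by
    constructor
    rintro (p | c) h
    · have : (p.1 - p.1).natAbs + (p.2 - p.2).natAbs = 1 := h
      simp at this
    · exact h

def inV1 : GVert → Prop
  | Sum.inl p => (p.1 - p.2) % 2 = 0
  | Sum.inr _ => False

def inV2 : GVert → Prop
  | Sum.inl p => (p.1 - p.2) % 2 ≠ 0
  | Sum.inr _ => False

def inV3 : GVert → Prop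
  | Sum.inl _ => False
  | Sum.inr _ => True

/-- ℰ₁-edges: joining an integer point to a half-integer point. -/
def isE1 (e : Sym2 GVert) : Prop := ∃ p c : ℤ × ℤ, e = s(Sum.inl p, Sum.inr c)

/-- ℰ₂-edges: joining two integer points. -/
def isE2 (e : Sym2 GVert) : Prop := ∃ p q : ℤ × ℤ, e = s(Sum.inl p, Sum.inl q)

/-- A dimer covering of a finite subgraph `G` of the radial graph: a perfect
matching of `G`, given as a subgraph `M` of `G` covering every vertex exactly once. -/
def IsDimerCovering (G M : radialGraph.Subgraph) : Prop :=
  M ≤ G ∧ M.verts = G.verts ∧ M.IsMatching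

/-- Vertex set of the rectangle graph `G^(m,n)`. -/
def rectVerts (m n : ℕ) : Set GVert :=
  {v | (∃ p : ℤ × ℤ, v = Sum.inl p ∧ 0 ≤ p.1 ∧ p.1 ≤ m ∧ 0 ≤ p.2 ∧ p.2 ≤ n) ∨
       (∃ c : ℤ × ℤ, v = Sum.inr c ∧ 0 ≤ c.1 ∧ c.1 < m ∧ 0 ≤ c.2 ∧ c.2 < n)}

/-- The rectangle graph `G^(m,n)`, as induced subgraph of the radial graph. -/
def rectG (m n : ℕ) : radialGraph.Subgraph :=
  (⊤ : radialGraph.Subgraph).induce (rectVerts m n)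

/-!
Half-integer points are pairwise non-adjacent, so each of them is matched to an integer point,
and distinct ones by distinct dimers: `|V ∩ 𝒱₃|` is the number of ℰ₁-dimers. The dimers
partition the vertices, so `|V| = 2 (#ℰ₁ + #ℰ₂)`, and subtracting the first count leaves
`|V ∩ 𝒱₁| + |V ∩ 𝒱₂| = |V ∩ 𝒱₃| + 2 #ℰ₂`.
-/

namespace SimpleGraph.Subgraph.IsMatching

variable {V : Type*} {G : SimpleGraph V} {M : G.Subgraph}

theorem finite_edgeSet (hM : M.IsMatching) (hfin : M.verts.Finite) : M.edgeSet.Finite :=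
  have : Finite M.verts := hfin.to_subtype
  Set.finite_coe_iff.mp (Finite.of_surjective _ (toEdge.surjective hM))

theorem ncard_verts_eq_two_mul_ncard_edgeSet (hM : M.IsMatching) (hfin : M.verts.Finite) :
    M.verts.ncard = 2 * M.edgeSet.ncard := by
  have : Finite M.verts := hfin.to_subtype
  have : Fintype M.edgeSet := (hM.finite_edgeSet hfin).fintype
  have hfiber : ∀ e : M.edgeSet, Nat.card {v // hM.toEdge v = e} = 2 := by
    rintro ⟨e, he⟩
    induction e using Sym2.ind with
    | h u v =>
      change Nat.card (hM.toEdge ⁻¹' {⟨s(u, v), he⟩}) = 2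
      rw [Nat.card_coe_set_eq, hM.toEdge_preimage_singleton he,
        Set.ncard_pair (by simpa using (M.adj_sub he).ne)]
  rw [← Nat.card_coe_set_eq, ← Nat.card_coe_set_eq,
    ← Nat.card_congr (Equiv.sigmaFiberEquiv hM.toEdge), Nat.card_sigma,
    Finset.sum_const_nat fun e _ => hfiber e, Finset.card_univ, ← Nat.card_eq_fintype_card,
    mul_comm]

theorem ncard_verts_inter_of_isIndepSet (hM : M.IsMatching) {S : Set V} (hS : G.IsIndepSet S) :
    (M.verts ∩ S).ncard = (M.edgeSet ∩ {e | ∃ v ∈ e, v ∈ S}).ncard := by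
  refine Set.ncard_congr (fun v hv => (hM.toEdge ⟨v, hv.1⟩ : Sym2 V)) ?_ ?_ ?_
  · rintro v ⟨hv, hvS⟩
    exact ⟨(hM.toEdge ⟨v, hv⟩).2, v, hM.mem_coe_toEdge hv, hvS⟩
  · rintro v w ⟨hv, hvS⟩ ⟨hw, hwS⟩ hvw
    obtain ⟨u, hvu, -⟩ := hM hv
    have hw' := hM.mem_coe_toEdge hw
    rw [← hvw, hM.toEdge_eq_of_adj hvu, Sym2.mem_iff] at hw'
    rcases hw' with rfl | rfl
    · rfl
    · exact absurd (M.adj_sub hvu) (hS hvS hwS (M.adj_sub hvu).ne)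
  · rintro e ⟨he, v, hve, hvS⟩
    obtain ⟨w, rfl⟩ := Sym2.mem_iff_exists.mp hve
    exact ⟨v, ⟨M.edge_vert he, hvS⟩, by rw [hM.toEdge_eq_of_adj he]⟩

end SimpleGraph.Subgraph.IsMatching

theorem radialGraph_isIndepSet_inV3 : radialGraph.IsIndepSet {v | inV3 v} := by
  rintro (p | c) hp (q | d) hq - hadj
  exacts [hp, hp, hq, hadj]

theorem compl_setOf_isE2 : {e | isE2 e}ᶜ = {e : Sym2 GVert | ∃ v ∈ e, inV3 v} := by
  ext e
  induction e using Sym2.ind with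
  | h v w =>
    rcases v with p | c <;> rcases w with q | d
    · simpa [inV3] using ⟨p, q, rfl⟩
    · simp [isE2, inV3]
    · simp [isE2, inV3]
    · simpa [isE2, inV3] using ⟨c.1, c.2, Or.inl rfl⟩

theorem ncard_inter_inV1_add_ncard_inter_inV2 {s : Set GVert} (hs : s.Finite) :
    (s ∩ {v | inV1 v}).ncard + (s ∩ {v | inV2 v}).ncard = (s \ {v | inV3 v}).ncard := by
  rw [← Set.ncard_union_eq _ (hs.inter_of_left _) (hs.inter_of_left _),
    ← Set.inter_union_distrib_left]
  · congr 1
    ext (p | c)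
    all_goals simp only [Set.mem_inter_iff, Set.mem_union, Set.mem_ofPred_eq, Set.mem_sdiff,
      inV1, inV2, inV3]
    all_goals tauto
  · rw [Set.disjoint_left]
    rintro (p | c) ⟨-, h1⟩ ⟨-, h2⟩
    exacts [h2 h1, h1]

theorem SimpleGraph.Subgraph.IsMatching.ncard_inV1_add_ncard_inV2 {M : radialGraph.Subgraph}
    (hM : M.IsMatching) (hfin : M.verts.Finite) :
    (M.verts ∩ {v | inV1 v}).ncard + (M.verts ∩ {v | inV2 v}).ncard
      = (M.verts ∩ {v | inV3 v}).ncard + 2 * (M.edgeSet ∩ {e | isE2 e}).ncard := by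
  have hverts := Set.ncard_inter_add_ncard_sdiff_eq_ncard M.verts {v | inV3 v} hfin
  have hedges := Set.ncard_inter_add_ncard_sdiff_eq_ncard M.edgeSet {e | isE2 e}
    (hM.finite_edgeSet hfin)
  rw [Set.sdiff_eq, compl_setOf_isE2] at hedges
  have hV3 := hM.ncard_verts_inter_of_isIndepSet radialGraph_isIndepSet_inV3
  simp only [Set.mem_ofPred_eq] at hV3
  have htotal := hM.ncard_verts_eq_two_mul_ncard_edgeSet hfin
  rw [ncard_inter_inV1_add_ncard_inter_inV2 hfin]
  omega

theorem IsDimerCovering.ncard_inV1_add_ncard_inV2 {G M : radialGraph.Subgraph}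
    (hM : IsDimerCovering G M) (hfin : G.verts.Finite) :
    (G.verts ∩ {v | inV1 v}).ncard + (G.verts ∩ {v | inV2 v}).ncard
      = (G.verts ∩ {v | inV3 v}).ncard + 2 * (M.edgeSet ∩ {e | isE2 e}).ncard := by
  obtain ⟨-, hverts, hmatch⟩ := hM
  rw [← hverts] at hfin ⊢
  exact hmatch.ncard_inV1_add_ncard_inV2 hfin

/-- For every finite subgraph `G` of the radial graph 𝒢 and every dimer
covering `M` of `G`, the number of impurities of `M` equals
`(|V(G) ∩ 𝒱₁| + |V(G) ∩ 𝒱₂| - |V(G) ∩ 𝒱₃|)/2`; in particular the number of impurities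
is the same for all dimer coverings of `G`. -/
theorem stmt1 (G : radialGraph.Subgraph) (hfin : G.verts.Finite)
    (M : radialGraph.Subgraph) (hM : IsDimerCovering G M) :
    (G.verts ∩ {v | inV1 v}).ncard + (G.verts ∩ {v | inV2 v}).ncard
        = (G.verts ∩ {v | inV3 v}).ncard + 2 * (M.edgeSet ∩ {e | isE2 e}).ncard ∧
    ∀ M' : radialGraph.Subgraph, IsDimerCovering G M' →
      (M.edgeSet ∩ {e | isE2 e}).ncard = (M'.edgeSet ∩ {e | isE2 e}).ncard := by
  have hcount := hM.ncard_inV1_add_ncard_inV2 hfin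
  refine ⟨hcount, fun M' hM' => ?_⟩
  have hcount' := hM'.ncard_inV1_add_ncard_inV2 hfin
  omega
end

section
/- For all integers m,n ≥ 1, every dimer covering of G^(m,n) contains exactly (m+n+1)/2 impurities; in particular, if G^(m,n) admits a dimer covering then m + n is odd (the parities of m and n are opposite). -/
/-!
Give every integer point charge `+1` and every half-integer point charge `-1`. In a dimer
covering each vertex lies on exactly one dimer, so the total charge of the vertex set is the sum of
the charges of the dimers. No two half-integer points are adjacent, so a dimer has charge `0`
unless it is an impurity, which has charge `2`. The total charge of `G^(m,n)` is
`(m+1)(n+1) - mn = m+n+1`.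
-/

open SimpleGraph

namespace SimpleGraph.Subgraph.IsMatching

variable {V : Type*} {G : SimpleGraph V} {M : G.Subgraph}

theorem pairwiseDisjoint_edgeSet (hM : M.IsMatching) :
    M.edgeSet.PairwiseDisjoint ((↑) : Sym2 V → Set V) := by
  intro e he e' he' hne
  refine Set.disjoint_left.mpr fun v hv hv' => hne ?_
  obtain ⟨u, rfl⟩ := Sym2.mem_iff_exists.mp hv
  obtain ⟨u', rfl⟩ := Sym2.mem_iff_exists.mp hv'
  rw [hM.eq_of_adj_left (Subgraph.mem_edgeSet.mp he) (Subgraph.mem_edgeSet.mp he')]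

theorem finsum_mem_verts {R : Type*} [AddCommMonoid R] (hM : M.IsMatching)
    (hfin : M.verts.Finite) (w : V → R) :
    ∑ᶠ v ∈ M.verts, w v = ∑ᶠ e ∈ M.edgeSet, ∑ᶠ v ∈ (e : Set V), w v := by
  rw [hM.verts_eq_biUnion_edgeSet]
  refine finsum_mem_biUnion hM.pairwiseDisjoint_edgeSet (hM.finite_edgeSet hfin) ?_
  intro e _
  induction e using Sym2.ind with
  | h a b => rw [Sym2.coe_mk]; exact Set.toFinite _

end SimpleGraph.Subgraph.IsMatching

def charge : GVert → ℤ := Sum.elim (fun _ => 1) (fun _ => -1)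

theorem finsum_mem_charge_of_mem_edgeSet {e : Sym2 GVert} (he : e ∈ radialGraph.edgeSet) :
    ∑ᶠ v ∈ (e : Set GVert), charge v = {e | isE2 e}.indicator 2 e := by
  induction e using Sym2.ind with
  | h a b =>
    rw [Sym2.coe_mk, finsum_mem_pair (radialGraph.ne_of_adj he)]
    rcases a with p | c <;> rcases b with q | d
    · rw [Set.indicator_of_mem (show _ ∈ {e | isE2 e} from ⟨p, q, rfl⟩)]
      norm_num [charge]
    · simp [charge, isE2]
    · simp [charge, isE2]
    · exact he.elim

theorem IsDimerCovering.two_mul_ncard_impurities {G M : radialGraph.Subgraph}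
    (hM : IsDimerCovering G M) (hfin : G.verts.Finite) :
    2 * ((M.edgeSet ∩ {e | isE2 e}).ncard : ℤ) = ∑ᶠ v ∈ G.verts, charge v := by
  obtain ⟨-, hverts, hmatch⟩ := hM
  have hE : (M.edgeSet ∩ {e | isE2 e}).Finite :=
    (hmatch.finite_edgeSet (hverts ▸ hfin)).inter_of_left _
  rw [← hverts, hmatch.finsum_mem_verts (hverts ▸ hfin),
    finsum_mem_congr rfl fun e he => finsum_mem_charge_of_mem_edgeSet (M.edgeSet_subset he),
    finsum_mem_def, Set.indicator_indicator, ← finsum_mem_def,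
    finsum_mem_eq_finite_toFinset_sum _ hE, Set.ncard_eq_toFinset_card _ hE]
  simp [mul_comm]

theorem rectG_verts (m n : ℕ) :
    (rectG m n).verts = ↑((Finset.Icc (0 : ℤ) m ×ˢ Finset.Icc (0 : ℤ) n).disjSum
      (Finset.Ico (0 : ℤ) m ×ˢ Finset.Ico (0 : ℤ) n)) := by
  ext (⟨x, y⟩ | ⟨x, y⟩) <;> simp [rectG, rectVerts, and_assoc]

theorem finsum_mem_rectG_verts_charge (m n : ℕ) :
    ∑ᶠ v ∈ (rectG m n).verts, charge v = m + n + 1 := by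
  rw [rectG_verts, finsum_mem_coe_finset, Finset.sum_disjSum]
  simp only [charge, Sum.elim_inl, Sum.elim_inr, Finset.sum_const, Finset.card_product,
    Int.card_Icc, Int.card_Ico, sub_zero, Int.toNat_natCast_add_one, Int.toNat_natCast,
    nsmul_eq_mul]
  push_cast
  ring

theorem stmt2_general (m n : ℕ) :
    (∀ M : radialGraph.Subgraph, IsDimerCovering (rectG m n) M →
        2 * (M.edgeSet ∩ {e | isE2 e}).ncard = m + n + 1) ∧
    ((∃ M : radialGraph.Subgraph, IsDimerCovering (rectG m n) M) → Odd (m + n)) := by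
  have impurities (M : radialGraph.Subgraph) (hM : IsDimerCovering (rectG m n) M) :
      2 * (M.edgeSet ∩ {e | isE2 e}).ncard = m + n + 1 := by
    have h := hM.two_mul_ncard_impurities (rectG_verts m n ▸ Finset.finite_toSet _)
    rw [finsum_mem_rectG_verts_charge] at h
    exact_mod_cast h
  refine ⟨impurities, fun ⟨M, hM⟩ => ?_⟩
  have := impurities M hM
  rw [Nat.odd_iff]
  omega

/-- For all integers `m, n ≥ 1`, every dimer covering of `G^(m,n)`
contains exactly `(m+n+1)/2` impurities (stated without division: twice the number of
impurities equals `m+n+1`); in particular, if `G^(m,n)` admits a dimer covering then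
`m + n` is odd. -/
theorem stmt2 (m n : ℕ) (hm : 1 ≤ m) (hn : 1 ≤ n) :
    (∀ M : radialGraph.Subgraph, IsDimerCovering (rectG m n) M →
        2 * (M.edgeSet ∩ {e | isE2 e}).ncard = m + n + 1) ∧
    ((∃ M : radialGraph.Subgraph, IsDimerCovering (rectG m n) M) → Odd (m + n)) :=
  stmt2_general m n
end

section
/- Let G be a finite subgraph of 𝒢 and let M, M′ be dimer coverings of G whose symmetric difference M △ M′ is the edge set of a 4-cycle of G containing exactly one vertex of 𝒱₃ (a triangular move). Then the 4-cycle contains exactly two edges e, e′ lying in ℰ₂, these two edges share a common endpoint, and the impurity sets differ precisely by exchanging them: either M′ ∩ ℰ₂ = (M ∩ ℰ₂ ∖ {e}) ∪ {e′} or M′ ∩ ℰ₂ = (M ∩ ℰ₂ ∖ {e′}) ∪ {e}. -/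
/-!
Let `x` be the unique half-integer vertex of the square `a b c d`. Its two neighbours on the
square are integer points, joined to `x` by ℰ₁-edges, so the ℰ₂-edges of the square are the
two remaining edges, and they meet at the vertex opposite `x`. Two edges of a matching never
share a vertex, so these two edges lie one in `M \ M'` and the other in `M' \ M`; outside the
square `M` and `M'` agree, hence their impurity sets differ exactly by exchanging the two.
-/

open SimpleGraph

open Sum

section Exchange

variable {α : Type*} {A A' P : Set α} {e e' : α}

theorem Set.inter_eq_sdiff_union_of_exchange (he : e ∈ A \ A') (he' : e' ∈ A' \ A)
    (hP' : e' ∈ P) (hsd : ∀ f ∈ symmDiff A A', f ∈ P → f = e ∨ f = e') :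
    A' ∩ P = (A ∩ P) \ {e} ∪ {e'} := by
  ext f
  grind

theorem Set.inter_exchange_of_mem_symmDiff (he : e ∈ symmDiff A A') (he' : e' ∈ symmDiff A A')
    (hA : e ∈ A → e' ∉ A) (hA' : e ∈ A' → e' ∉ A') (hP : e ∈ P) (hP' : e' ∈ P)
    (hsd : ∀ f ∈ symmDiff A A', f ∈ P → f = e ∨ f = e') :
    A' ∩ P = (A ∩ P) \ {e} ∪ {e'} ∨ A' ∩ P = (A ∩ P) \ {e'} ∪ {e} := by
  rcases he with he | he <;> rcases he' with he' | he'
  · exact absurd he'.1 (hA he.1)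
  · exact .inl (Set.inter_eq_sdiff_union_of_exchange he he' hP' hsd)
  · exact .inr (Set.inter_eq_sdiff_union_of_exchange he' he hP fun f hf hfP =>
      (hsd f hf hfP).symm)
  · exact absurd he'.1 (hA' he.1)

end Exchange

theorem SimpleGraph.Subgraph.IsMatching.notMem_edgeSet_of_ne {V : Type*} {H : SimpleGraph V}
    {N : H.Subgraph} (hN : N.IsMatching) {p q s : V} (hps : p ≠ s) (h : s(p, q) ∈ N.edgeSet) :
    s(q, s) ∉ N.edgeSet :=
  hN.not_adj_left_of_ne hps (N.adj_symm h)

def squareEdges {α : Type*} (a b c d : α) : Set (Sym2 α) := {s(a, b), s(b, c), s(c, d), s(d, a)}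

theorem squareEdges_rotate {α : Type*} (a b c d : α) :
    squareEdges a b c d = squareEdges b c d a := by
  ext f
  simp only [squareEdges, Set.mem_insert_iff, Set.mem_singleton_iff]
  tauto

theorem exists_eq_inl_of_not_inV3 {v : GVert} (hv : ¬ inV3 v) : ∃ p, v = inl p := by
  cases v with
  | inl p => exact ⟨p, rfl⟩
  | inr c => exact absurd trivial hv

theorem not_isE2_inl_inr (p c : ℤ × ℤ) : ¬ isE2 s(inl p, inr c) := by
  rintro ⟨p', q', h⟩
  simp at h

theorem exists_squareEdges_eq_of_inV3 {a b c d : GVert} (ha : inV3 a) (hb : ¬ inV3 b)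
    (hc : ¬ inV3 c) (hd : ¬ inV3 d) (hbd : b ≠ d) :
    ∃ r p q s, p ≠ s ∧ squareEdges a b c d = squareEdges (inr r) (inl p) (inl q) (inl s) := by
  obtain ⟨r, rfl⟩ : ∃ r, a = inr r := by
    cases a with
    | inl p => exact absurd ha id
    | inr r => exact ⟨r, rfl⟩
  obtain ⟨p, rfl⟩ := exists_eq_inl_of_not_inV3 hb
  obtain ⟨q, rfl⟩ := exists_eq_inl_of_not_inV3 hc
  obtain ⟨s, rfl⟩ := exists_eq_inl_of_not_inV3 hd
  exact ⟨r, p, q, s, hbd ∘ congrArg inl, rfl⟩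

theorem exists_squareEdges_eq_of_ncard_inV3_eq_one {a b c d : GVert}
    (hnd : ([a, b, c, d] : List GVert).Nodup)
    (h1 : ({v ∈ ({a, b, c, d} : Set GVert) | inV3 v}).ncard = 1) :
    ∃ r p q s, p ≠ s ∧ squareEdges a b c d = squareEdges (inr r) (inl p) (inl q) (inl s) := by
  obtain ⟨x, hx⟩ := Set.ncard_eq_one.mp h1
  have hxV3 : ∀ v, v ∈ ({a, b, c, d} : Set GVert) ∧ inV3 v ↔ v = x :=
    Set.ext_iff.mp hx
  have hout : ∀ v ∈ ({a, b, c, d} : Set GVert), v ≠ x → ¬ inV3 v :=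
    fun v hv hvx hv3 => hvx ((hxV3 v).mp ⟨hv, hv3⟩)
  obtain ⟨hxmem, hx3⟩ := (hxV3 x).mpr rfl
  simp only [List.nodup_cons, List.mem_cons, List.not_mem_nil, or_false, List.nodup_nil,
    and_true, not_or, not_false_eq_true] at hnd
  obtain ⟨⟨hab, hac, had⟩, ⟨hbc, hbd⟩, hcd⟩ := hnd
  simp only [Set.mem_insert_iff, Set.mem_singleton_iff] at hxmem hout
  rcases hxmem with rfl | rfl | rfl | rfl
  · exact exists_squareEdges_eq_of_inV3 hx3 (hout b (by tauto) (Ne.symm hab))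
      (hout c (by tauto) (Ne.symm hac)) (hout d (by tauto) (Ne.symm had)) hbd
  · rw [squareEdges_rotate]
    exact exists_squareEdges_eq_of_inV3 hx3 (hout c (by tauto) (Ne.symm hbc))
      (hout d (by tauto) (Ne.symm hbd)) (hout a (by tauto) hab) (Ne.symm hac)
  · rw [squareEdges_rotate, squareEdges_rotate]
    exact exists_squareEdges_eq_of_inV3 hx3 (hout d (by tauto) (Ne.symm hcd))
      (hout a (by tauto) hac) (hout b (by tauto) hbc) (Ne.symm hbd)
  · rw [squareEdges_rotate, squareEdges_rotate, squareEdges_rotate]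
    exact exists_squareEdges_eq_of_inV3 hx3 (hout a (by tauto) had)
      (hout b (by tauto) hbd) (hout c (by tauto) hcd) hac

theorem isE2_of_mem_squareEdges {r p q s : ℤ × ℤ} {f : Sym2 GVert}
    (hf : f ∈ squareEdges (inr r) (inl p) (inl q) (inl s)) (hf2 : isE2 f) :
    f = s(inl p, inl q) ∨ f = s(inl q, inl s) := by
  rcases hf with rfl | rfl | rfl | rfl
  · exact absurd hf2 (Sym2.eq_swap ▸ not_isE2_inl_inr p r)
  · exact .inl rfl
  · exact .inr rfl
  · exact absurd hf2 (not_isE2_inl_inr s r)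

theorem stmt6_general (G : radialGraph.Subgraph)
    (M M' : radialGraph.Subgraph)
    (hM : IsDimerCovering G M) (hM' : IsDimerCovering G M')
    (a b c d : GVert) (hnd : ([a, b, c, d] : List GVert).Nodup)
    (hsd : symmDiff M.edgeSet M'.edgeSet = {s(a, b), s(b, c), s(c, d), s(d, a)})
    (h1 : ({v ∈ ({a, b, c, d} : Set GVert) | inV3 v}).ncard = 1) :
    ∃ e e' : Sym2 GVert, e ≠ e' ∧
      e ∈ symmDiff M.edgeSet M'.edgeSet ∧ e' ∈ symmDiff M.edgeSet M'.edgeSet ∧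
      isE2 e ∧ isE2 e' ∧
      (∀ f ∈ symmDiff M.edgeSet M'.edgeSet, isE2 f → f = e ∨ f = e') ∧
      (∃ v : GVert, v ∈ e ∧ v ∈ e') ∧
      ((M'.edgeSet ∩ {f | isE2 f} = (M.edgeSet ∩ {f | isE2 f}) \ {e} ∪ {e'}) ∨
       (M'.edgeSet ∩ {f | isE2 f} = (M.edgeSet ∩ {f | isE2 f}) \ {e'} ∪ {e})) := by
  obtain ⟨r, p, q, s, hps, hsq⟩ := exists_squareEdges_eq_of_ncard_inV3_eq_one hnd h1
  change _ = squareEdges a b c d at hsd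
  rw [hsq] at hsd
  have he : s(inl p, inl q) ∈ symmDiff M.edgeSet M'.edgeSet := by
    rw [hsd]; simp [squareEdges]
  have he' : s(inl q, inl s) ∈ symmDiff M.edgeSet M'.edgeSet := by
    rw [hsd]; simp [squareEdges]
  have hE2 : ∀ f ∈ symmDiff M.edgeSet M'.edgeSet, isE2 f →
      f = s(inl p, inl q) ∨ f = s(inl q, inl s) :=
    fun f hf => isE2_of_mem_squareEdges (hsd ▸ hf)
  refine ⟨_, _, ?_, he, he', ⟨p, q, rfl⟩, ⟨q, s, rfl⟩, hE2, ⟨inl q, by simp, by simp⟩, ?_⟩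
  · simp only [ne_eq, Sym2.eq_iff, inl.injEq]
    grind
  · exact Set.inter_exchange_of_mem_symmDiff he he'
      (hM.2.2.notMem_edgeSet_of_ne (inl_injective.ne hps))
      (hM'.2.2.notMem_edgeSet_of_ne (inl_injective.ne hps)) ⟨p, q, rfl⟩ ⟨q, s, rfl⟩ hE2

/-- triangular move.  Let `G` be a finite subgraph of the radial graph
and let `M, M'` be dimer coverings of `G` whose symmetric difference is the edge set of a
4-cycle of `G` containing exactly one vertex of 𝒱₃.  Then the 4-cycle contains exactly
two edges `e, e'` lying in ℰ₂, these two edges share a common endpoint, and the impurity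
sets differ precisely by exchanging them. -/
theorem stmt6 (G : radialGraph.Subgraph) (hfin : G.verts.Finite)
    (M M' : radialGraph.Subgraph)
    (hM : IsDimerCovering G M) (hM' : IsDimerCovering G M')
    (a b c d : GVert) (hnd : ([a, b, c, d] : List GVert).Nodup)
    (hab : G.Adj a b) (hbc : G.Adj b c) (hcd : G.Adj c d) (hda : G.Adj d a)
    (hsd : symmDiff M.edgeSet M'.edgeSet = {s(a, b), s(b, c), s(c, d), s(d, a)})
    (h1 : ({v ∈ ({a, b, c, d} : Set GVert) | inV3 v}).ncard = 1) :
    ∃ e e' : Sym2 GVert, e ≠ e' ∧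
      e ∈ symmDiff M.edgeSet M'.edgeSet ∧ e' ∈ symmDiff M.edgeSet M'.edgeSet ∧
      isE2 e ∧ isE2 e' ∧
      (∀ f ∈ symmDiff M.edgeSet M'.edgeSet, isE2 f → f = e ∨ f = e') ∧
      (∃ v : GVert, v ∈ e ∧ v ∈ e') ∧
      ((M'.edgeSet ∩ {f | isE2 f} = (M.edgeSet ∩ {f | isE2 f}) \ {e} ∪ {e'}) ∨
       (M'.edgeSet ∩ {f | isE2 f} = (M.edgeSet ∩ {f | isE2 f}) \ {e'} ∪ {e})) :=
  stmt6_general G M M' hM hM' a b c d hnd hsd h1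
end

section
/- Let m,n ≥ 1 and let G_B^(m,n) be the bow-tie lattice, obtained from G^(m,n) by deleting all vertical ℰ₂-edges (edges joining (x,y) and (x,y+1)). Then for every set S of horizontal ℰ₂-edges of G^(m,n), the number of dimer coverings M of G^(m,n) with M ∩ ℰ₂ = S equals the number of dimer coverings M of G_B^(m,n) with M ∩ ℰ₂ = S. -/
open SimpleGraph

/-- Vertical ℰ₂-edges of the radial graph: edges joining `(x,y)` and `(x,y+1)`. -/
def verticalE2 : Set (Sym2 GVert) :=
  {e | ∃ p : ℤ × ℤ, e = s(Sum.inl p, Sum.inl (p.1, p.2 + 1))}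

/-- Horizontal ℰ₂-edges: edges joining `(x,y)` and `(x+1,y)`. -/
def horizE2 (e : Sym2 GVert) : Prop :=
  ∃ p : ℤ × ℤ, e = s(Sum.inl p, Sum.inl (p.1 + 1, p.2))

/-- The bow-tie lattice `G_B^(m,n)`: `G^(m,n)` with all vertical ℰ₂-edges deleted. -/
def bowtieG (m n : ℕ) : radialGraph.Subgraph :=
  (rectG m n).deleteEdges verticalE2

namespace SimpleGraph.Subgraph

variable {V : Type*} {G : SimpleGraph V}

theorem le_deleteEdges_iff {H K : G.Subgraph} {s : Set (Sym2 V)} :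
    H ≤ K.deleteEdges s ↔ H ≤ K ∧ Disjoint H.edgeSet s := by
  refine ⟨fun h => ⟨h.trans (deleteEdges_le s), ?_⟩, fun ⟨hle, hdisj⟩ => ⟨hle.1, ?_⟩⟩
  · rw [Set.disjoint_left]
    rintro e he hes
    induction e using Sym2.ind with
    | _ v w => exact (h.2 he).2 hes
  · exact fun v w hvw => ⟨hle.2 hvw, Set.disjoint_left.1 hdisj hvw⟩

end SimpleGraph.Subgraph

theorem isDimerCovering_deleteEdges_iff {G M : radialGraph.Subgraph} {s : Set (Sym2 GVert)}
    (hMs : Disjoint M.edgeSet s) :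
    IsDimerCovering (G.deleteEdges s) M ↔ IsDimerCovering G M := by
  simp only [IsDimerCovering, Subgraph.le_deleteEdges_iff, hMs, and_true,
    Subgraph.deleteEdges_verts]

theorem isE2_of_mem_verticalE2 {e : Sym2 GVert} (he : e ∈ verticalE2) : isE2 e := by
  obtain ⟨p, rfl⟩ := he
  exact ⟨_, _, rfl⟩

theorem not_horizE2_of_mem_verticalE2 {e : Sym2 GVert} (he : e ∈ verticalE2) : ¬horizE2 e := by
  obtain ⟨p, rfl⟩ := he
  rintro ⟨q, hq⟩
  simp only [Sym2.eq_iff, Sum.inl.injEq, Prod.ext_iff] at hq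
  omega

theorem disjoint_verticalE2 {M : radialGraph.Subgraph} {S : Set (Sym2 GVert)}
    (hS : ∀ e ∈ S, horizE2 e) (hMS : M.edgeSet ∩ {e | isE2 e} = S) :
    Disjoint M.edgeSet verticalE2 :=
  Set.disjoint_left.2 fun e heM hev =>
    not_horizE2_of_mem_verticalE2 hev (hS e (hMS ▸ ⟨heM, isE2_of_mem_verticalE2 hev⟩))

theorem stmt19_general (m n : ℕ)
    (S : Set (Sym2 GVert))
    (hS : ∀ e ∈ S, e ∈ (rectG m n).edgeSet ∧ horizE2 e) :
    Nat.card {M : radialGraph.Subgraph //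
        IsDimerCovering (rectG m n) M ∧ M.edgeSet ∩ {e | isE2 e} = S}
      = Nat.card {M : radialGraph.Subgraph //
        IsDimerCovering (bowtieG m n) M ∧ M.edgeSet ∩ {e | isE2 e} = S} :=
  Nat.card_congr <| Equiv.subtypeEquivRight fun _ => and_congr_left fun hMS =>
    (isDimerCovering_deleteEdges_iff
      (disjoint_verticalE2 (fun e he => (hS e he).2) hMS)).symm

/-- For every set `S` of horizontal ℰ₂-edges of `G^(m,n)`, the number
of dimer coverings `M` of `G^(m,n)` with `M ∩ ℰ₂ = S` equals the number of dimer
coverings `M` of the bow-tie lattice `G_B^(m,n)` with `M ∩ ℰ₂ = S`. -/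
theorem stmt19 (m n : ℕ) (hm : 1 ≤ m) (hn : 1 ≤ n)
    (S : Set (Sym2 GVert))
    (hS : ∀ e ∈ S, e ∈ (rectG m n).edgeSet ∧ horizE2 e) :
    Nat.card {M : radialGraph.Subgraph //
        IsDimerCovering (rectG m n) M ∧ M.edgeSet ∩ {e | isE2 e} = S}
      = Nat.card {M : radialGraph.Subgraph //
        IsDimerCovering (bowtieG m n) M ∧ M.edgeSet ∩ {e | isE2 e} = S} :=
  stmt19_general m n S hS
end
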